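/- arXiv:2111.01643 — 2 statements merged into one kernel-verified Lean document; each statement's English description precedes it below -/
import Mathlib

section
/- The form B is a pre-inner product on H₁ × H₂: it is additive and complex-linear in the second argument, conjugate-linear in the first argument, Hermitian in the sense that B(y,x) is the complex conjugate of B(x,y) for all x, y ∈ H₁ × H₂, and positive semi-definite in the sense that for every x ∈ H₁ × H₂ the value B(x,x) is a real number with B(x,x) ≥ 0. -/
/-!
Put `T := U ∘ p₁ : H₁ → H₂`. Its adjoint is `U⁻¹ ∘ p₂`, so
`B(x, y) = ⟪x₁, y₁⟫ + ⟪x₂, y₂⟫ + ⟪T x₁, y₂⟫ + ⟪x₂, T y₁⟫`, the form of the block operator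
`[[1, T†], [T, 1]]`. Sesquilinearity and Hermitian symmetry are then formal, and positivity
comes from `Re B(x, x) = ‖x₂ + T x₁‖² + (‖x₁‖² - ‖T x₁‖²)` together with `‖T‖ ≤ 1`.
-/

open scoped InnerProductSpace ComplexConjugate

noncomputable section

variable {H₁ H₂ : Type*}
  [NormedAddCommGroup H₁] [InnerProductSpace ℂ H₁]
  [NormedAddCommGroup H₂] [InnerProductSpace ℂ H₂]

/-- The pre-inner product `B` on `H₁ × H₂` of the minimally glued one-particle structure. -/
def gluedForm (O₁ : Submodule ℂ H₁) (O₂ : Submodule ℂ H₂)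
    [O₁.HasOrthogonalProjection] [O₂.HasOrthogonalProjection]
    (U : O₁ ≃ₗᵢ[ℂ] O₂) (x y : H₁ × H₂) : ℂ :=
  ⟪x.1, y.1⟫_ℂ + ⟪x.2, y.2⟫_ℂ
    + ⟪x.1, (U.symm (O₂.orthogonalProjectionOnto y.2) : H₁)⟫_ℂ
    + ⟪x.2, (U (O₁.orthogonalProjectionOnto y.1) : H₂)⟫_ℂ

section CouplingForm

variable {𝕜 E F : Type*} [RCLike 𝕜]
  [NormedAddCommGroup E] [InnerProductSpace 𝕜 E]
  [NormedAddCommGroup F] [InnerProductSpace 𝕜 F]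

open LinearMap RCLike

def couplingForm (T : E →ₗ[𝕜] F) : E × F →ₗ⋆[𝕜] E × F →ₗ[𝕜] 𝕜 :=
  ((innerₛₗ 𝕜).comp (fst 𝕜 E F)).compl₂ (fst 𝕜 E F)
    + ((innerₛₗ 𝕜).comp (snd 𝕜 E F)).compl₂ (snd 𝕜 E F)
    + ((innerₛₗ 𝕜).comp (T ∘ₗ fst 𝕜 E F)).compl₂ (snd 𝕜 E F)
    + ((innerₛₗ 𝕜).comp (snd 𝕜 E F)).compl₂ (T ∘ₗ fst 𝕜 E F)

@[simp]
theorem couplingForm_apply (T : E →ₗ[𝕜] F) (x y : E × F) :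
    couplingForm T x y = ⟪x.1, y.1⟫_𝕜 + ⟪x.2, y.2⟫_𝕜 + ⟪T x.1, y.2⟫_𝕜 + ⟪x.2, T y.1⟫_𝕜 :=
  rfl

theorem couplingForm_isSymm (T : E →ₗ[𝕜] F) : (couplingForm T).IsSymm := by
  refine isSymm_def.2 fun x y => ?_
  simp only [couplingForm_apply, map_add, inner_conj_symm]
  ring

theorem re_couplingForm_self (T : E →ₗ[𝕜] F) (x : E × F) :
    re (couplingForm T x x) = ‖x.2 + T x.1‖ ^ 2 + (‖x.1‖ ^ 2 - ‖T x.1‖ ^ 2) := by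
  rw [couplingForm_apply, @norm_add_sq 𝕜, ← inner_conj_symm (T x.1) x.2]
  simp only [map_add, conj_re, inner_self_eq_norm_sq]
  ring

open scoped ComplexOrder in
theorem couplingForm_isPosSemidef {T : E →ₗ[𝕜] F} (hT : ∀ x, ‖T x‖ ≤ ‖x‖) :
    (couplingForm T).IsPosSemidef where
  isSymm := couplingForm_isSymm T
  nonneg x := by
    refine nonneg_iff.2 ⟨?_, conj_eq_iff_im.1 ((couplingForm_isSymm T).eq x x)⟩
    have : ‖T x.1‖ ^ 2 ≤ ‖x.1‖ ^ 2 := by gcongr; exact hT x.1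
    rw [re_couplingForm_self]
    positivity

end CouplingForm

section GluingMap

variable {𝕜 E F : Type*} [RCLike 𝕜]
  [NormedAddCommGroup E] [InnerProductSpace 𝕜 E]
  [NormedAddCommGroup F] [InnerProductSpace 𝕜 F]
  (K : Submodule 𝕜 E) (L : Submodule 𝕜 F) [K.HasOrthogonalProjection]
  (U : K ≃ₗᵢ[𝕜] L)

def gluingMap : E →ₗ[𝕜] F :=
  L.subtype ∘ₗ U.toLinearEquiv.toLinearMap ∘ₗ K.orthogonalProjectionOnto.toLinearMap

@[simp]
theorem gluingMap_apply (x : E) : gluingMap K L U x = U (K.orthogonalProjectionOnto x) :=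
  rfl

theorem norm_gluingMap_apply_le (x : E) : ‖gluingMap K L U x‖ ≤ ‖x‖ := by
  rw [gluingMap_apply, Submodule.norm_coe, U.norm_map]
  exact K.norm_orthogonalProjectionOnto_apply_le x

theorem inner_gluingMap_left [L.HasOrthogonalProjection] (x : E) (y : F) :
    ⟪gluingMap K L U x, y⟫_𝕜 = ⟪x, (U.symm (L.orthogonalProjectionOnto y) : E)⟫_𝕜 := by
  rw [gluingMap_apply, ← Submodule.inner_orthogonalProjectionOnto_eq_of_mem_left,
    U.inner_map_eq_flip, Submodule.inner_orthogonalProjectionOnto_eq_of_mem_right]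

end GluingMap

theorem gluedForm_eq_couplingForm (O₁ : Submodule ℂ H₁) (O₂ : Submodule ℂ H₂)
    [O₁.HasOrthogonalProjection] [O₂.HasOrthogonalProjection] (U : O₁ ≃ₗᵢ[ℂ] O₂)
    (x y : H₁ × H₂) : gluedForm O₁ O₂ U x y = couplingForm (gluingMap O₁ O₂ U) x y := by
  rw [gluedForm, couplingForm_apply, inner_gluingMap_left, gluingMap_apply]

/-- `B` is additive and complex-linear in the second argument, conjugate-linear in the
first argument, Hermitian, and positive semi-definite: a pre-inner product on `H₁ × H₂`. -/
theorem gluedForm_is_pre_inner_product (O₁ : Submodule ℂ H₁) (O₂ : Submodule ℂ H₂)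
    [O₁.HasOrthogonalProjection] [O₂.HasOrthogonalProjection]
    (U : O₁ ≃ₗᵢ[ℂ] O₂) :
    (∀ x y z : H₁ × H₂, gluedForm O₁ O₂ U x (y + z)
        = gluedForm O₁ O₂ U x y + gluedForm O₁ O₂ U x z)
    ∧ (∀ (c : ℂ) (x y : H₁ × H₂), gluedForm O₁ O₂ U x (c • y) = c * gluedForm O₁ O₂ U x y)
    ∧ (∀ x y z : H₁ × H₂, gluedForm O₁ O₂ U (x + y) z
        = gluedForm O₁ O₂ U x z + gluedForm O₁ O₂ U y z)
    ∧ (∀ (c : ℂ) (x y : H₁ × H₂), gluedForm O₁ O₂ U (c • x) y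
        = (starRingEnd ℂ) c * gluedForm O₁ O₂ U x y)
    ∧ (∀ x y : H₁ × H₂, gluedForm O₁ O₂ U y x = (starRingEnd ℂ) (gluedForm O₁ O₂ U x y))
    ∧ (∀ x : H₁ × H₂, (gluedForm O₁ O₂ U x x).im = 0 ∧ 0 ≤ (gluedForm O₁ O₂ U x x).re) := by
  open scoped ComplexOrder in
  have hB := couplingForm_isPosSemidef (norm_gluingMap_apply_le O₁ O₂ U)
  simp only [gluedForm_eq_couplingForm]
  refine ⟨fun x y z => map_add _ y z, fun c x y => map_smul _ c y,
    fun x y z => LinearMap.map_add₂ _ x y z, fun c x y => LinearMap.map_smulₛₗ₂ _ c x y,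
    fun x y => (hB.eq x y).symm, fun x => ?_⟩
  obtain ⟨hre, him⟩ := Complex.nonneg_iff.1 (hB.nonneg x)
  exact ⟨him.symm, hre⟩

end
end

section
/- Density of the glued one-particle structure: assume in addition that the closure of K₁(V₁) + i·K₁(V₁) equals H₁ and the closure of K₂(V₂) + i·K₂(V₂) equals H₂. Then the complex-linear span of the set { Φ(K₁f₁, K₂f₂) : f₁ ∈ V₁, f₂ ∈ V₂ } is dense in O₁ᗮ × O₂ᗮ × O₂ (where Oᵢᗮ is the orthogonal complement of Oᵢ in Hᵢ), i.e. K̃(V₁+V₂) + i·K̃(V₁+V₂) is dense in the glued Hilbert space. -/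
open scoped InnerProductSpace ComplexConjugate

noncomputable section

variable {H₁ H₂ : Type*}
  [NormedAddCommGroup H₁] [InnerProductSpace ℂ H₁]
  [NormedAddCommGroup H₂] [InnerProductSpace ℂ H₂]

def gluedMap (O₁ : Submodule ℂ H₁) (O₂ : Submodule ℂ H₂)
    [O₁.HasOrthogonalProjection] [O₂.HasOrthogonalProjection]
    (U : O₁ ≃ₗᵢ[ℂ] O₂) (x : H₁ × H₂) : H₁ × H₂ × H₂ :=
  (x.1 - (O₁.orthogonalProjectionOnto x.1 : H₁),
   x.2 - (O₂.orthogonalProjectionOnto x.2 : H₂),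
   (U (O₁.orthogonalProjectionOnto x.1) : H₂) + (O₂.orthogonalProjectionOnto x.2 : H₂))

/-!
`Φ` is a bounded ℂ-linear map whose range is exactly `O₁ᗮ × O₂ᗮ × O₂`, a closed set: a preimage of
`(a, b, c)` is `(a + U⁻¹c, b)`. The density hypotheses make the ℂ-span of `K₁(V₁) × K₂(V₂)` dense
in `H₁ × H₂`, and a continuous linear map sends a set with dense span to a set whose span is dense
in its range.
-/

theorem Submodule.dense_span_prod {𝕜 E F : Type*} [Semiring 𝕜] [TopologicalSpace E]
    [TopologicalSpace F] [AddCommMonoid E] [Module 𝕜 E] [AddCommMonoid F] [Module 𝕜 F]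
    {s : Set E} {t : Set F} (hs₀ : 0 ∈ s) (ht₀ : 0 ∈ t)
    (hs : Dense (Submodule.span 𝕜 s : Set E)) (ht : Dense (Submodule.span 𝕜 t : Set F)) :
    Dense (Submodule.span 𝕜 (s ×ˢ t) : Set (E × F)) := by
  refine (hs.prod ht).mono fun x hx ↦ ?_
  have hle : (Submodule.span 𝕜 s).prod (Submodule.span 𝕜 t) ≤ Submodule.span 𝕜 (s ×ˢ t) := by
    rw [← LinearMap.span_inl_union_inr]
    refine Submodule.span_mono (Set.union_subset ?_ ?_) <;> rintro _ ⟨y, hy, rfl⟩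
    exacts [⟨hy, ht₀⟩, ⟨hs₀, hy⟩]
  exact hle (Submodule.mem_prod.2 hx)

theorem ContinuousLinearMap.closure_span_image_eq_closure_range {𝕜 E F : Type*} [Semiring 𝕜]
    [TopologicalSpace E] [TopologicalSpace F] [AddCommMonoid E] [Module 𝕜 E]
    [AddCommMonoid F] [Module 𝕜 F] (L : E →L[𝕜] F) {s : Set E}
    (hs : Dense (Submodule.span 𝕜 s : Set E)) :
    closure (Submodule.span 𝕜 (L '' s) : Set F) = closure (Set.range L) := by
  rw [← L.coe_coe, ← Submodule.map_span, Submodule.map_coe]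
  refine (closure_mono (Set.image_subset_range _ _)).antisymm (closure_minimal ?_ isClosed_closure)
  rw [← Set.image_univ, ← hs.closure_eq]
  exact image_closure_subset_closure_image L.continuous

theorem setOf_add_I_smul_subset_span_range {V H : Type*} [AddCommMonoid V] [Module ℝ V]
    [AddCommMonoid H] [Module ℂ H] [Module ℝ H] (K : V →ₗ[ℝ] H) :
    {x : H | ∃ f g : V, x = K f + Complex.I • K g} ⊆ Submodule.span ℂ (Set.range K) := by
  rintro _ ⟨f, g, rfl⟩
  exact add_mem (Submodule.subset_span ⟨f, rfl⟩)
    (Submodule.smul_mem _ _ (Submodule.subset_span ⟨g, rfl⟩))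

section

variable (O₁ : Submodule ℂ H₁) (O₂ : Submodule ℂ H₂)
    [O₁.HasOrthogonalProjection] [O₂.HasOrthogonalProjection] (U : O₁ ≃ₗᵢ[ℂ] O₂)

def gluedMapL : H₁ × H₂ →L[ℂ] H₁ × H₂ × H₂ :=
  ((ContinuousLinearMap.id ℂ H₁ - O₁.starProjection).comp (ContinuousLinearMap.fst ℂ H₁ H₂)).prod
    (((ContinuousLinearMap.id ℂ H₂ - O₂.starProjection).comp (ContinuousLinearMap.snd ℂ H₁ H₂)).prod
      ((O₂.subtypeL.comp ((U.toContinuousLinearEquiv : O₁ →L[ℂ] O₂).comp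
        O₁.orthogonalProjectionOnto)).coprod O₂.starProjection))

theorem coe_gluedMapL : ⇑(gluedMapL O₁ O₂ U) = gluedMap O₁ O₂ U := rfl

theorem range_gluedMap : Set.range (gluedMap O₁ O₂ U) =
    {z : H₁ × H₂ × H₂ | z.1 ∈ O₁ᗮ ∧ z.2.1 ∈ O₂ᗮ ∧ z.2.2 ∈ O₂} := by
  ext z
  constructor
  · rintro ⟨x, rfl⟩
    exact ⟨O₁.sub_starProjection_mem_orthogonal _, O₂.sub_starProjection_mem_orthogonal _,
      O₂.add_mem (U _).2 (O₂.orthogonalProjectionOnto _).2⟩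
  · rintro ⟨h₁, h₂, h₃⟩
    set w := U.symm ⟨z.2.2, h₃⟩
    have hp₁ : O₁.orthogonalProjectionOnto (z.1 + w) = w := by
      rw [map_add, O₁.orthogonalProjectionOnto_apply_of_mem_orthogonal h₁,
        O₁.orthogonalProjectionOnto_mem_subspace_eq_self, zero_add]
    have hp₂ : O₂.orthogonalProjectionOnto z.2.1 = 0 :=
      O₂.orthogonalProjectionOnto_apply_of_mem_orthogonal h₂
    refine ⟨(z.1 + w, z.2.1), ?_⟩
    simp only [gluedMap, hp₁, hp₂, w, LinearIsometryEquiv.apply_symm_apply]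
    simp

theorem isClosed_range_gluedMap : IsClosed (Set.range (gluedMap O₁ O₂ U)) := by
  have hO₂ : IsClosed (O₂ : Set H₂) := by
    rw [← Submodule.orthogonal_orthogonal O₂]
    exact Submodule.isClosed_orthogonal _
  rw [range_gluedMap]
  exact (O₁.isClosed_orthogonal.preimage continuous_fst).inter
    ((O₂.isClosed_orthogonal.preimage (continuous_fst.comp continuous_snd)).inter
      (hO₂.preimage (continuous_snd.comp continuous_snd)))

end

theorem gluedMap_dense_range_general (O₁ : Submodule ℂ H₁) (O₂ : Submodule ℂ H₂)
    [O₁.HasOrthogonalProjection] [O₂.HasOrthogonalProjection]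
    (U : O₁ ≃ₗᵢ[ℂ] O₂)
    {V : Type*} [AddCommGroup V] [Module ℝ V] (V₁ V₂ : Submodule ℝ V)
    (K₁ : V₁ →ₗ[ℝ] H₁) (K₂ : V₂ →ₗ[ℝ] H₂)
    (hd₁ : closure {x : H₁ | ∃ f g : V₁, x = K₁ f + Complex.I • K₁ g} = Set.univ)
    (hd₂ : closure {x : H₂ | ∃ f g : V₂, x = K₂ f + Complex.I • K₂ g} = Set.univ) :
    closure (Submodule.span ℂ
        {z : H₁ × H₂ × H₂ | ∃ (f₁ : V₁) (f₂ : V₂), z = gluedMap O₁ O₂ U (K₁ f₁, K₂ f₂)}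
        : Set (H₁ × H₂ × H₂))
      = {z : H₁ × H₂ × H₂ | z.1 ∈ O₁ᗮ ∧ z.2.1 ∈ O₂ᗮ ∧ z.2.2 ∈ O₂} := by
  have hK₁ : Dense (Submodule.span ℂ (Set.range K₁) : Set H₁) :=
    (dense_iff_closure_eq.2 hd₁).mono (setOf_add_I_smul_subset_span_range K₁)
  have hK₂ : Dense (Submodule.span ℂ (Set.range K₂) : Set H₂) :=
    (dense_iff_closure_eq.2 hd₂).mono (setOf_add_I_smul_subset_span_range K₂)
  have hS : {z : H₁ × H₂ × H₂ | ∃ (f₁ : V₁) (f₂ : V₂), z = gluedMap O₁ O₂ U (K₁ f₁, K₂ f₂)} =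
      gluedMapL O₁ O₂ U '' (Set.range K₁ ×ˢ Set.range K₂) := by
    ext z
    simp [coe_gluedMapL, eq_comm]
  rw [hS, ContinuousLinearMap.closure_span_image_eq_closure_range _
      (Submodule.dense_span_prod (Set.mem_range.2 ⟨0, map_zero K₁⟩)
        (Set.mem_range.2 ⟨0, map_zero K₂⟩) hK₁ hK₂),
    coe_gluedMapL, (isClosed_range_gluedMap O₁ O₂ U).closure_eq, range_gluedMap]

/-- Density of the glued one-particle structure: if `K₁(V₁) + i·K₁(V₁)` is dense in `H₁` and
`K₂(V₂) + i·K₂(V₂)` is dense in `H₂`, then the complex-linear span of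
`{Φ(K₁f₁, K₂f₂) : f₁ ∈ V₁, f₂ ∈ V₂}` is dense in `O₁ᗮ × O₂ᗮ × O₂`, i.e.
`K̃(V₁+V₂) + i·K̃(V₁+V₂)` is dense in the glued Hilbert space. -/
theorem gluedMap_dense_range (O₁ : Submodule ℂ H₁) (O₂ : Submodule ℂ H₂)
    [O₁.HasOrthogonalProjection] [O₂.HasOrthogonalProjection]
    (U : O₁ ≃ₗᵢ[ℂ] O₂)
    {V : Type*} [AddCommGroup V] [Module ℝ V] (V₁ V₂ : Submodule ℝ V)
    (K₁ : V₁ →ₗ[ℝ] H₁) (K₂ : V₂ →ₗ[ℝ] H₂)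
    (hcompat : ∀ (f : V) (h₁ : f ∈ V₁) (h₂ : f ∈ V₂),
      ∃ hm : K₁ ⟨f, h₁⟩ ∈ O₁, (U ⟨K₁ ⟨f, h₁⟩, hm⟩ : H₂) = K₂ ⟨f, h₂⟩)
    (hd₁ : closure {x : H₁ | ∃ f g : V₁, x = K₁ f + Complex.I • K₁ g} = Set.univ)
    (hd₂ : closure {x : H₂ | ∃ f g : V₂, x = K₂ f + Complex.I • K₂ g} = Set.univ) :
    closure (Submodule.span ℂ
        {z : H₁ × H₂ × H₂ | ∃ (f₁ : V₁) (f₂ : V₂), z = gluedMap O₁ O₂ U (K₁ f₁, K₂ f₂)}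
        : Set (H₁ × H₂ × H₂))
      = {z : H₁ × H₂ × H₂ | z.1 ∈ O₁ᗮ ∧ z.2.1 ∈ O₂ᗮ ∧ z.2.2 ∈ O₂} :=
  gluedMap_dense_range_general O₁ O₂ U V₁ V₂ K₁ K₂ hd₁ hd₂

end
end
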